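/- arXiv:1111.3447 — 4 statements merged into one kernel-verified Lean document; each statement's English description precedes it below -/
import Mathlib

section
/- Let γ be a probability measure on [0,1] with n-th moments c_n = ∫ r^n dγ(r), and fix q > 0. Then the following are equivalent: (1) the point 1 lies in the support of γ; (2) lim_{n→∞} c_n^{1/n} = 1; (3) lim_{n→∞} c_{q(n+1)}/c_{qn} = 1, where c_t = ∫ r^t dγ(r) for real t ≥ 0. -/
/-!
Write `c_t = powMoment γ t`. If `γ` charges every interval `(β, 1]`, then
`c_t ≥ β^t γ(β, 1]`, which gives `c_t^{1/t} → 1`. Splitting `r^t` at `β` gives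
`c_{t+q} ≥ β^q (c_t - β^t)`, and `β^t` is negligible against `c_t` (compare with
`β' ∈ (β, 1)`), so `c_{t+q} / c_t` is eventually above any `β^q < 1`. Both quantities are at
most `1`. If instead `γ` lives on `[0, α]` with `α < 1`, then `c_t ≤ α^t` and
`c_{t+q} ≤ α^q c_t`, so they stay below `α` and `α^q` respectively.
-/

open MeasureTheory Filter Topology Set

noncomputable def powMoment (γ : Measure ℝ) (t : ℝ) : ℝ := ∫ r, r ^ t ∂γ

lemma rpow_add_le_mul_rpow {r α t u : ℝ} (hr : 0 ≤ r) (hrα : r ≤ α) (ht : 0 ≤ t)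
    (hu : 0 ≤ u) : r ^ (t + u) ≤ α ^ u * r ^ t := by
  rcases (add_nonneg ht hu).eq_or_lt with h | h
  · obtain ⟨rfl, rfl⟩ : t = 0 ∧ u = 0 := ⟨by linarith, by linarith⟩
    simp
  · rw [Real.rpow_add' hr h.ne', mul_comm]
    exact mul_le_mul_of_nonneg_right (Real.rpow_le_rpow hr hrα hu) (Real.rpow_nonneg hr t)

lemma mul_rpow_sub_le_rpow_add {r β t u : ℝ} (hr : 0 ≤ r) (hβ : 0 ≤ β) (ht : 0 ≤ t)
    (hu : 0 ≤ u) : β ^ u * (r ^ t - β ^ t) ≤ r ^ (t + u) := by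
  rcases le_or_gt r β with hrβ | hβr
  · exact (mul_nonpos_of_nonneg_of_nonpos (Real.rpow_nonneg hβ u)
      (sub_nonpos.2 (Real.rpow_le_rpow hr hrβ ht))).trans (Real.rpow_nonneg hr _)
  · have hr0 : 0 < r := hβ.trans_lt hβr
    rw [Real.rpow_add hr0, mul_comm (r ^ t)]
    calc β ^ u * (r ^ t - β ^ t) ≤ β ^ u * r ^ t :=
          mul_le_mul_of_nonneg_left (sub_le_self _ (Real.rpow_nonneg hβ t))
            (Real.rpow_nonneg hβ u)
      _ ≤ r ^ u * r ^ t :=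
          mul_le_mul_of_nonneg_right (Real.rpow_le_rpow hβ hβr.le hu) (Real.rpow_nonneg hr t)

lemma not_tendsto_nhds_of_eventually_le {ι X : Type*} [TopologicalSpace X] [LinearOrder X]
    [OrderTopology X] {l : Filter ι} [l.NeBot] {f : ι → X} {a b : X} (hab : a < b)
    (h : ∀ᶠ x in l, f x ≤ a) : ¬ Tendsto f l (𝓝 b) := fun hf =>
  let ⟨_, hle, hlt⟩ := (h.and (hf.eventually (lt_mem_nhds hab))).exists
  hle.not_gt hlt

section Moments

variable {γ : Measure ℝ}

lemma integrable_rpow_of_ae_mem_Icc [IsFiniteMeasure γ] (hγ : ∀ᵐ r ∂γ, r ∈ Icc (0 : ℝ) 1)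
    {t : ℝ} (ht : 0 ≤ t) : Integrable (fun r : ℝ => r ^ t) γ := by
  refine (integrable_const (1 : ℝ)).mono' (Real.continuous_rpow_const ht).aestronglyMeasurable ?_
  filter_upwards [hγ] with r hr
  rw [Real.norm_of_nonneg (Real.rpow_nonneg hr.1 t)]
  exact Real.rpow_le_one hr.1 hr.2 ht

lemma powMoment_nonneg (hγ : ∀ᵐ r ∂γ, 0 ≤ r) (t : ℝ) : 0 ≤ powMoment γ t :=
  integral_nonneg_of_ae (by filter_upwards [hγ] with r hr using Real.rpow_nonneg hr t)

lemma powMoment_add_le [IsFiniteMeasure γ] (hγ : ∀ᵐ r ∂γ, r ∈ Icc (0 : ℝ) 1) {α : ℝ}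
    (hα : ∀ᵐ r ∂γ, r ≤ α) {t u : ℝ} (ht : 0 ≤ t) (hu : 0 ≤ u) :
    powMoment γ (t + u) ≤ α ^ u * powMoment γ t := by
  rw [powMoment, powMoment, ← integral_const_mul]
  refine integral_mono_ae (integrable_rpow_of_ae_mem_Icc hγ (add_nonneg ht hu))
    ((integrable_rpow_of_ae_mem_Icc hγ ht).const_mul _) ?_
  filter_upwards [hγ, hα] with r hr hrα
  exact rpow_add_le_mul_rpow hr.1 hrα ht hu

lemma powMoment_le_rpow [IsProbabilityMeasure γ] (hγ : ∀ᵐ r ∂γ, r ∈ Icc (0 : ℝ) 1) {α : ℝ}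
    (hα : ∀ᵐ r ∂γ, r ≤ α) {t : ℝ} (ht : 0 ≤ t) : powMoment γ t ≤ α ^ t := by
  simpa [powMoment] using powMoment_add_le hγ hα le_rfl ht

lemma mul_measureReal_Ioc_le_powMoment [IsFiniteMeasure γ]
    (hγ : ∀ᵐ r ∂γ, r ∈ Icc (0 : ℝ) 1) {β t : ℝ} (hβ : 0 ≤ β) (ht : 0 ≤ t) :
    β ^ t * γ.real (Ioc β 1) ≤ powMoment γ t := by
  have hint := integrable_rpow_of_ae_mem_Icc hγ ht
  calc β ^ t * γ.real (Ioc β 1) ≤ ∫ r in Ioc β 1, r ^ t ∂γ :=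
        setIntegral_ge_of_const_le_real measurableSet_Ioc (measure_ne_top γ _)
          (fun r hr => Real.rpow_le_rpow hβ hr.1.le ht) hint.integrableOn
    _ ≤ powMoment γ t :=
        setIntegral_le_integral hint
          (by filter_upwards [hγ] with r hr using Real.rpow_nonneg hr.1 t)

lemma mul_sub_le_powMoment_add [IsProbabilityMeasure γ] (hγ : ∀ᵐ r ∂γ, r ∈ Icc (0 : ℝ) 1)
    {β t u : ℝ} (hβ : 0 ≤ β) (ht : 0 ≤ t) (hu : 0 ≤ u) :
    β ^ u * (powMoment γ t - β ^ t) ≤ powMoment γ (t + u) := by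
  have hint := integrable_rpow_of_ae_mem_Icc hγ ht
  have hsplit : β ^ u * (powMoment γ t - β ^ t) = ∫ r, β ^ u * (r ^ t - β ^ t) ∂γ := by
    rw [integral_const_mul, integral_sub hint (integrable_const _)]
    simp [powMoment]
  rw [hsplit]
  refine integral_mono_ae ((hint.sub (integrable_const _)).const_mul _)
    (integrable_rpow_of_ae_mem_Icc hγ (add_nonneg ht hu)) ?_
  filter_upwards [hγ] with r hr
  exact mul_rpow_sub_le_rpow_add hr.1 hβ ht hu

end Moments

section SupportContainsOne

variable {γ : Measure ℝ} [IsProbabilityMeasure γ] (hγ : ∀ᵐ r ∂γ, r ∈ Icc (0 : ℝ) 1)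
  (hsupp : ∀ β < 1, 0 < γ.real (Ioc β 1))
include hγ hsupp

lemma powMoment_pos {t : ℝ} (ht : 0 ≤ t) : 0 < powMoment γ t :=
  (mul_pos (by positivity) (hsupp _ one_half_lt_one)).trans_le
    (mul_measureReal_Ioc_le_powMoment hγ (by norm_num) ht)

lemma tendsto_powMoment_rpow_inv :
    Tendsto (fun t => powMoment γ t ^ t⁻¹) atTop (𝓝 1) := by
  refine tendsto_order.2 ⟨fun a ha => ?_, fun b hb => ?_⟩
  · obtain ⟨β, haβ, hβ1⟩ := exists_between (max_lt ha one_pos)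
    have hβ : 0 < β := (le_max_right a 0).trans_lt haβ
    have hm := hsupp β hβ1
    have hroot : Tendsto (fun t : ℝ => β * γ.real (Ioc β 1) ^ t⁻¹) atTop (𝓝 β) := by
      simpa using (((Real.continuousAt_const_rpow hm.ne').tendsto.comp
        tendsto_inv_atTop_zero).const_mul β)
    filter_upwards [hroot.eventually (lt_mem_nhds ((le_max_left a 0).trans_lt haβ)),
      eventually_gt_atTop 0] with t hlt ht
    refine hlt.trans_le ?_
    calc β * γ.real (Ioc β 1) ^ t⁻¹ = (β ^ t * γ.real (Ioc β 1)) ^ t⁻¹ := by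
          rw [Real.mul_rpow (by positivity) hm.le, ← Real.rpow_mul hβ.le, mul_inv_cancel₀ ht.ne',
            Real.rpow_one]
      _ ≤ powMoment γ t ^ t⁻¹ := Real.rpow_le_rpow (by positivity)
          (mul_measureReal_Ioc_le_powMoment hγ hβ.le ht.le) (inv_nonneg.2 ht.le)
  · filter_upwards [eventually_gt_atTop 0] with t ht
    refine lt_of_le_of_lt (Real.rpow_le_one (powMoment_nonneg (hγ.mono fun _ hr => hr.1) t)
      ((powMoment_le_rpow hγ (hγ.mono fun _ hr => hr.2) ht.le).trans_eq (Real.one_rpow t))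
      (inv_nonneg.2 ht.le)) hb

lemma le_powMoment_add_div {β β' t q : ℝ} (hβ : 0 < β) (hββ' : β < β') (hβ' : β' < 1)
    (ht : 0 ≤ t) (hq : 0 ≤ q) :
    β ^ q * (1 - (β / β') ^ t / γ.real (Ioc β' 1)) ≤ powMoment γ (t + q) / powMoment γ t := by
  have hm := hsupp β' hβ'
  have hlow := mul_measureReal_Ioc_le_powMoment hγ (hβ.le.trans hββ'.le) ht
  have hβ'0 : 0 < β' ^ t := Real.rpow_pos_of_pos (hβ.trans hββ') t
  rw [le_div_iff₀ (powMoment_pos hγ hsupp ht)]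
  calc β ^ q * (1 - (β / β') ^ t / γ.real (Ioc β' 1)) * powMoment γ t
      ≤ β ^ q * (powMoment γ t - β ^ t) := by
        rw [mul_assoc]
        refine mul_le_mul_of_nonneg_left ?_ (Real.rpow_nonneg hβ.le q)
        have hsmall : β ^ t ≤ (β / β') ^ t / γ.real (Ioc β' 1) * powMoment γ t := by
          rw [Real.div_rpow hβ.le (hβ.trans hββ').le, div_div, div_mul_eq_mul_div,
            le_div_iff₀ (mul_pos hβ'0 hm)]
          exact mul_le_mul_of_nonneg_left hlow (Real.rpow_nonneg hβ.le t)
        linarith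
    _ ≤ powMoment γ (t + q) := mul_sub_le_powMoment_add hγ hβ.le ht hq

lemma tendsto_powMoment_add_div {q : ℝ} (hq : 0 ≤ q) :
    Tendsto (fun t => powMoment γ (t + q) / powMoment γ t) atTop (𝓝 1) := by
  refine tendsto_order.2 ⟨fun a ha => ?_, fun b hb => ?_⟩
  · have hpow : Tendsto (fun β : ℝ => β ^ q) (𝓝[<] 1) (𝓝 1) := by
      simpa using (Real.continuousAt_rpow_const 1 q (Or.inl one_ne_zero)).tendsto.mono_left
        nhdsWithin_le_nhds
    have hIoo : ∀ᶠ β in 𝓝[<] (1 : ℝ), β ∈ Ioo 0 1 := Ioo_mem_nhdsLT zero_lt_one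
    obtain ⟨β, haβ, hβ0, hβ1⟩ := ((hpow.eventually (lt_mem_nhds ha)).and hIoo).exists
    obtain ⟨β', hββ', hβ'1⟩ := exists_between hβ1
    have hβ'0 : 0 < β' := hβ0.trans hββ'
    have hgeom : Tendsto (fun t : ℝ => (β / β') ^ t) atTop (𝓝 0) :=
      tendsto_rpow_atTop_of_base_lt_one _ (by linarith [div_pos hβ0 hβ'0])
        ((div_lt_one hβ'0).2 hββ')
    have hlim : Tendsto (fun t : ℝ => β ^ q * (1 - (β / β') ^ t / γ.real (Ioc β' 1))) atTop
        (𝓝 (β ^ q)) := by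
      simpa using ((hgeom.div_const (γ.real (Ioc β' 1))).const_sub 1).const_mul (β ^ q)
    filter_upwards [hlim.eventually (lt_mem_nhds haβ), eventually_ge_atTop 0] with t hlt ht
    exact hlt.trans_le (le_powMoment_add_div hγ hsupp hβ0 hββ' hβ'1 ht hq)
  · filter_upwards [eventually_ge_atTop 0] with t ht
    refine lt_of_le_of_lt (div_le_one_of_le₀ ?_ (powMoment_nonneg (hγ.mono fun _ hr => hr.1) t)) hb
    simpa using powMoment_add_le hγ (hγ.mono fun _ hr => hr.2) ht hq

end SupportContainsOne

section SupportBelowOne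

variable {γ : Measure ℝ} [IsProbabilityMeasure γ] (hγ : ∀ᵐ r ∂γ, r ∈ Icc (0 : ℝ) 1) {α : ℝ}
  (hα : ∀ᵐ r ∂γ, r ≤ α)
include hγ hα

lemma powMoment_rpow_inv_le (hα0 : 0 ≤ α) {t : ℝ} (ht : 0 < t) :
    powMoment γ t ^ t⁻¹ ≤ α := by
  calc powMoment γ t ^ t⁻¹ ≤ (α ^ t) ^ t⁻¹ :=
        Real.rpow_le_rpow (powMoment_nonneg (hγ.mono fun _ hr => hr.1) t)
          (powMoment_le_rpow hγ hα ht.le) (inv_nonneg.2 ht.le)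
    _ = α := by rw [← Real.rpow_mul hα0, mul_inv_cancel₀ ht.ne', Real.rpow_one]

lemma powMoment_add_div_le (hα0 : 0 ≤ α) {t q : ℝ} (ht : 0 ≤ t) (hq : 0 ≤ q) :
    powMoment γ (t + q) / powMoment γ t ≤ α ^ q :=
  div_le_of_le_mul₀ (powMoment_nonneg (hγ.mono fun _ hr => hr.1) t) (Real.rpow_nonneg hα0 q)
    (powMoment_add_le hγ hα ht hq)

end SupportBelowOne

lemma exists_ae_le_of_not_forall_measure_Ioc_pos {γ : Measure ℝ}
    (hγ : ∀ᵐ r ∂γ, r ∈ Icc (0 : ℝ) 1) (h : ¬ ∀ ε > 0, 0 < γ (Ioc (1 - ε) 1)) :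
    ∃ α, 0 ≤ α ∧ α < 1 ∧ ∀ᵐ r ∂γ, r ≤ α := by
  push Not at h
  obtain ⟨ε, hε, h0⟩ := h
  refine ⟨max (1 - ε) 0, le_max_right _ _, max_lt (by linarith) one_pos, ?_⟩
  filter_upwards [hγ, measure_eq_zero_iff_ae_notMem.1 (nonpos_iff_eq_zero.1 h0)] with r hr hr'
  exact (le_of_not_gt fun h => hr' ⟨h, hr.2⟩).trans (le_max_left _ _)

theorem stmt0 (γ : Measure ℝ) [IsProbabilityMeasure γ]
    (hγ : γ (Set.Icc (0:ℝ) 1)ᶜ = 0) (q : ℝ) (hq : 0 < q)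
    (c : ℝ → ℝ) (hc : ∀ t, c t = ∫ r, r ^ t ∂γ) :
    ((∀ ε > 0, 0 < γ (Set.Ioc (1 - ε) 1)) ↔
      Tendsto (fun n : ℕ => (c n) ^ ((n : ℝ)⁻¹)) atTop (nhds 1)) ∧
    ((∀ ε > 0, 0 < γ (Set.Ioc (1 - ε) 1)) ↔
      Tendsto (fun n : ℕ => c (q * (n + 1)) / c (q * n)) atTop (nhds 1)) := by
  obtain rfl : c = powMoment γ := funext hc
  have hγ' : ∀ᵐ r ∂γ, r ∈ Icc (0 : ℝ) 1 := mem_ae_iff.2 hγ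
  have hqn : Tendsto (fun n : ℕ => q * n) atTop atTop :=
    tendsto_natCast_atTop_atTop.const_mul_atTop hq
  by_cases h : ∀ ε > 0, 0 < γ (Ioc (1 - ε) 1)
  · have hsupp : ∀ β < 1, 0 < γ.real (Ioc β 1) := fun β hβ =>
      ENNReal.toReal_pos (by simpa using (h (1 - β) (by linarith)).ne') (measure_ne_top γ _)
    refine ⟨iff_of_true h ((tendsto_powMoment_rpow_inv hγ' hsupp).comp
      tendsto_natCast_atTop_atTop), iff_of_true h ?_⟩
    simpa [Function.comp_def, mul_add_one] using
      (tendsto_powMoment_add_div hγ' hsupp hq.le).comp hqn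
  · obtain ⟨α, hα0, hα1, hα⟩ := exists_ae_le_of_not_forall_measure_Ioc_pos hγ' h
    refine ⟨iff_of_false h (not_tendsto_nhds_of_eventually_le hα1 ?_),
      iff_of_false h (not_tendsto_nhds_of_eventually_le (Real.rpow_lt_one hα0 hα1 hq) ?_)⟩
    · filter_upwards [eventually_gt_atTop 0] with n hn
      exact powMoment_rpow_inv_le hγ' hα hα0 (Nat.cast_pos.2 hn)
    · refine Eventually.of_forall fun n => ?_
      simpa [mul_add_one] using powMoment_add_div_le hγ' hα hα0 (by positivity : 0 ≤ q * n) hq.le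
end

section
/- Let μ be a finite measure supported on [-2,-1] ∪ [1,2] that is symmetric, i.e., μ(A) = μ(-A) for all measurable sets A. Suppose P is a monic polynomial of odd degree 2n+1 minimizing ∫ |P(x)| dμ(x) over all monic polynomials of degree 2n+1, and suppose P(0) = 0 with P(z) = z·Q(z) where Q is even. Then for every a ∈ (-1,1), the monic polynomial (z - a)·Q(z) achieves the same L¹(μ)-norm as P. In particular, the L¹(μ)-extremal monic polynomial of degree 2n+1 is not unique (unless μ = 0). -/
open MeasureTheory Set

theorem stmt4 (μ : Measure ℝ) [IsFiniteMeasure μ] (hμ0 : μ ≠ 0)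
    (hcarrier : μ ((Set.Icc (-2:ℝ) (-1) ∪ Set.Icc (1:ℝ) 2)ᶜ) = 0)
    (hsym : μ.map (fun x => -x) = μ)
    (n : ℕ) (P Q : Polynomial ℝ)
    (hPmonic : P.Monic) (hPdeg : P.natDegree = 2 * n + 1)
    (hmin : ∀ R : Polynomial ℝ, R.Monic → R.natDegree = 2 * n + 1 →
      ∫ x, |P.eval x| ∂μ ≤ ∫ x, |R.eval x| ∂μ)
    (hPQ : P = Polynomial.X * Q)
    (hQeven : ∀ x : ℝ, Q.eval (-x) = Q.eval x) :
    ∀ a ∈ Set.Ioo (-1:ℝ) 1,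
      ∫ x, |((Polynomial.X - Polynomial.C a) * Q).eval x| ∂μ = ∫ x, |P.eval x| ∂μ := by
  intro a ha
  obtain ⟨ha1, ha2⟩ := ha
  set S : Set ℝ := Set.Icc (-2:ℝ) (-1) ∪ Set.Icc (1:ℝ) 2 with hS
  have hScompact : IsCompact S := isCompact_Icc.union isCompact_Icc
  have hrestrict : μ.restrict S = μ := by
    apply Measure.restrict_eq_self_of_ae_mem
    rw [Filter.eventually_iff, mem_ae_iff]
    simpa using hcarrier
  have hint : ∀ f : ℝ → ℝ, Continuous f → Integrable f μ := by
    intro f hf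
    rw [← hrestrict]
    exact ContinuousOn.integrableOn_compact hScompact hf.continuousOn
  have hmap : ∀ f : ℝ → ℝ, Continuous f → ∫ x, f (-x) ∂μ = ∫ x, f x ∂μ := by
    intro f hf
    conv_rhs => rw [← hsym]
    rw [integral_map (by fun_prop) hf.aestronglyMeasurable]
  set f : ℝ → ℝ := fun x => |((Polynomial.X - Polynomial.C a) * Q).eval x| with hf
  set g : ℝ → ℝ := fun x => |P.eval x| with hg
  have hfc : Continuous f := (Polynomial.continuous _).abs
  have hfc' : Continuous fun x => f (-x) := hfc.comp continuous_neg
  have hgc : Continuous g := (Polynomial.continuous _).abs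
  -- pointwise identity on S
  have hkey : ∀ᵐ x ∂μ, f x + f (-x) = 2 * g x := by
    rw [Filter.eventually_iff, mem_ae_iff]
    apply measure_mono_null _ hcarrier
    intro x hx
    simp only [Set.mem_compl_iff]
    intro hxS
    apply hx
    simp only [Set.mem_setOf_eq, hf, hg, hPQ]
    simp only [Polynomial.eval_mul, Polynomial.eval_sub, Polynomial.eval_X, Polynomial.eval_C,
      hQeven]
    rw [abs_mul, abs_mul, abs_mul, ← add_mul]
    have : |x - a| + |-x - a| = 2 * |x| := by
      rcases hxS with h | h
      · obtain ⟨h1, h2⟩ := h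
        rw [abs_of_nonpos (by linarith), abs_of_nonneg (by linarith), abs_of_nonpos (by linarith)]
        ring
      · obtain ⟨h1, h2⟩ := h
        rw [abs_of_nonneg (by linarith), abs_of_nonpos (by linarith), abs_of_nonneg (by linarith)]
        ring
    rw [this]; ring
  have h1 : ∫ x, f x ∂μ = ∫ x, f (-x) ∂μ := (hmap f hfc).symm
  have h2 : (∫ x, f x ∂μ) + ∫ x, f (-x) ∂μ = 2 * ∫ x, g x ∂μ := by
    rw [← integral_add (hint f hfc) (hint _ hfc')]
    rw [integral_congr_ae hkey]
    rw [integral_const_mul]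
  linarith
end

section
/- Let g be holomorphic on the open unit disk and continuous on the closed unit disk, with g(0) = 1, g nonvanishing on the closed disk, and ∫_0^{2π} |g(e^{iθ})|^q dθ/(2π) = 1 for some q > 0. Then g ≡ 1. -/
/-!
Since the closed disk is star-shaped and `g` has no zeros there, `g = exp L` with `L 0 = 0`:
take for `L z` the sum of the principal logarithms of `g (t_{j+1} z) / g (t_j z)` along a fine
partition `t_j` of `[0, 1]`; by uniform continuity these ratios lie in the right half-plane.
Put `f = exp (q L)`, so `f 0 = 1` and `‖f‖ = ‖g‖ ^ q`. By the mean value property `f` and `‖f‖`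
both have circle average `1`, so the nonnegative function `‖f‖ - re f` averages to `0` and `f ≥ 0`
on the circle. There `(f - 1) ^ 2 = ‖f - 1‖ ^ 2`, whose average is `(f 0 - 1) ^ 2 = 0`, so `f = 1`
on the circle. Hence `‖g‖ = 1 = ‖g 0‖` on the circle, and the maximum modulus principle makes `g`
constant.
-/

open MeasureTheory Set Complex Metric
open scoped ComplexOrder

theorem smul_mem_closedBall_zero {E : Type*} [SeminormedAddCommGroup E] [NormedSpace ℝ E]
    {t r : ℝ} {z : E} (ht : t ∈ unitInterval) (hz : z ∈ closedBall 0 r) :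
    t • z ∈ closedBall 0 r :=
  (convex_closedBall 0 r).smul_mem_of_zero_mem (mem_closedBall_self (nonneg_of_mem_closedBall hz))
    hz ht

theorem smul_mem_ball_zero {E : Type*} [SeminormedAddCommGroup E] [NormedSpace ℝ E]
    {t r : ℝ} {z : E} (ht : t ∈ unitInterval) (hz : z ∈ ball 0 r) : t • z ∈ ball 0 r :=
  (convex_ball 0 r).smul_mem_of_zero_mem (mem_ball_self (pos_of_mem_ball hz)) hz ht

theorem natCast_div_mem_unitInterval {j N : ℕ} (h : j ≤ N) : (j / N : ℝ) ∈ unitInterval :=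
  unitInterval.div_mem (Nat.cast_nonneg _) (Nat.cast_nonneg _) (by exact_mod_cast h)

theorem IsCompact.exists_pos_forall_dist_lt_norm_div_sub_one_lt {X : Type*} [PseudoMetricSpace X]
    {K : Set X} {g : X → ℂ} (hK : IsCompact K) (hgc : ContinuousOn g K)
    (hg : ∀ z ∈ K, g z ≠ 0) :
    ∃ δ > 0, ∀ z ∈ K, ∀ w ∈ K, dist z w < δ → ‖g z / g w - 1‖ < 1 := by
  have hquot : ContinuousOn (fun p : X × X ↦ g p.1 / g p.2) (K ×ˢ K) :=
    (hgc.comp continuousOn_fst fun _ hp ↦ hp.1).div (hgc.comp continuousOn_snd fun _ hp ↦ hp.2)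
      fun p hp ↦ hg p.2 hp.2
  obtain ⟨δ, hδ, hclose⟩ :=
    Metric.uniformContinuousOn_iff.1 ((hK.prod hK).uniformContinuousOn_of_continuous hquot) 1
      one_pos
  refine ⟨δ, hδ, fun z hz w hw hzw ↦ ?_⟩
  have := hclose (z, w) ⟨hz, hw⟩ (w, w) ⟨hw, hw⟩ (by simpa [Prod.dist_eq] using hzw)
  rwa [div_self (hg w hw), dist_eq_norm] at this

theorem exists_nat_forall_div_mem_slitPlane {g : ℂ → ℂ} {r : ℝ}
    (hgc : ContinuousOn g (closedBall 0 r)) (hg : ∀ z ∈ closedBall 0 r, g z ≠ 0) :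
    ∃ N : ℕ, 0 < N ∧ ∀ j < N, ∀ z ∈ closedBall (0 : ℂ) r,
      g ((((j + 1 : ℕ) : ℝ) / N) • z) / g (((j : ℝ) / N) • z) ∈ slitPlane := by
  obtain ⟨δ, hδ, hratio⟩ :=
    (isCompact_closedBall 0 r).exists_pos_forall_dist_lt_norm_div_sub_one_lt hgc hg
  obtain ⟨N, hN⟩ := exists_nat_gt (r / δ)
  have hN₀ : (0 : ℝ) < N + 1 := by positivity
  refine ⟨N + 1, N.succ_pos, fun j hj z hz ↦ ?_⟩
  have hmem : ∀ i ≤ N + 1, ((i : ℝ) / (N + 1 : ℕ)) • z ∈ closedBall (0 : ℂ) r := fun i hi ↦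
    smul_mem_closedBall_zero (natCast_div_mem_unitInterval hi) hz
  have hstep : dist ((((j + 1 : ℕ) : ℝ) / (N + 1 : ℕ)) • z) (((j : ℝ) / (N + 1 : ℕ)) • z) < δ := by
    rw [dist_eq_norm, ← sub_smul, norm_smul]
    push_cast
    rw [← sub_div, add_sub_cancel_left, Real.norm_of_nonneg (by positivity), one_div_mul_eq_div,
      div_lt_iff₀ hN₀, ← div_lt_iff₀' hδ]
    calc ‖z‖ / δ ≤ r / δ := by gcongr; exact mem_closedBall_zero_iff.1 hz
      _ < N + 1 := hN.trans (lt_add_one _)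
  simpa only [add_sub_cancel] using
    mem_slitPlane_of_norm_lt_one (hratio _ (hmem _ hj) _ (hmem _ hj.le) hstep)

theorem exp_log_add_sum_log_div {u : ℕ → ℂ} {n : ℕ} (hu : ∀ j ≤ n, u j ≠ 0) :
    exp (log (u 0) + ∑ j ∈ Finset.range n, log (u (j + 1) / u j)) = u n := by
  induction n with
  | zero => simp [exp_log (hu 0 le_rfl)]
  | succ n ih =>
    have hn : u n ≠ 0 := hu n (by omega)
    rw [Finset.sum_range_succ, ← add_assoc, exp_add, ih fun j hj ↦ hu j (by omega),
      exp_log (div_ne_zero (hu _ le_rfl) hn), mul_div_cancel₀ _ hn]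

theorem exists_log_on_closedBall {g : ℂ → ℂ} {r : ℝ} (hr : 0 ≤ r)
    (hgc : ContinuousOn g (closedBall 0 r)) (hgd : DifferentiableOn ℂ g (ball 0 r))
    (hg : ∀ z ∈ closedBall 0 r, g z ≠ 0) :
    ∃ L : ℂ → ℂ, ContinuousOn L (closedBall 0 r) ∧ DifferentiableOn ℂ L (ball 0 r) ∧
      L 0 = log (g 0) ∧ ∀ z ∈ closedBall 0 r, exp (L z) = g z := by
  obtain ⟨N, hN, hslit⟩ := exists_nat_forall_div_mem_slitPlane hgc hg
  set u : ℕ → ℂ → ℂ := fun j z ↦ g (((j : ℝ) / N) • z)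
  have hmem : ∀ j ≤ N, MapsTo (((j : ℝ) / N) • ·) (closedBall (0 : ℂ) r) (closedBall 0 r) :=
    fun j hj _ ↦ smul_mem_closedBall_zero (natCast_div_mem_unitInterval hj)
  have hmem' : ∀ j ≤ N, MapsTo (((j : ℝ) / N) • ·) (ball (0 : ℂ) r) (ball 0 r) :=
    fun j hj _ ↦ smul_mem_ball_zero (natCast_div_mem_unitInterval hj)
  have hu : ∀ j ≤ N, ∀ z ∈ closedBall (0 : ℂ) r, u j z ≠ 0 := fun j hj z hz ↦ hg _ (hmem j hj hz)
  refine ⟨fun z ↦ log (g 0) + ∑ j ∈ Finset.range N, log (u (j + 1) z / u j z), ?_, ?_, ?_, ?_⟩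
  · refine continuousOn_const.add (continuousOn_finsetSum _ fun j hj ↦ ?_)
    have hj := Finset.mem_range.1 hj
    have hcont : ∀ i ≤ N, ContinuousOn (u i) (closedBall 0 r) := fun i hi ↦
      hgc.comp (continuous_const_smul _).continuousOn (hmem i hi)
    exact ((hcont _ hj).div (hcont j hj.le) (hu j hj.le)).clog (hslit j hj)
  · refine (differentiableOn_const _).add (DifferentiableOn.fun_sum fun j hj ↦ ?_)
    have hj := Finset.mem_range.1 hj
    have hdiff : ∀ i ≤ N, DifferentiableOn ℂ (u i) (ball 0 r) := fun i hi ↦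
      hgd.comp (differentiable_id.const_smul ((i : ℝ) / N)).differentiableOn (hmem' i hi)
    exact ((hdiff _ hj).div (hdiff j hj.le) fun z hz ↦
      hu j hj.le z (ball_subset_closedBall hz)).clog fun z hz ↦
        hslit j hj z (ball_subset_closedBall hz)
  · simp [u, div_self (hg 0 (mem_closedBall_self hr))]
  · intro z hz
    simpa [u, hN.ne'] using exp_log_add_sum_log_div (u := (u · z)) fun j hj ↦ hu j hj z hz

theorem Real.eq_zero_on_sphere_of_circleAverage_eq_zero {h : ℂ → ℝ} {c : ℂ} {R : ℝ}
    (hc : ContinuousOn h (sphere c |R|)) (h0 : ∀ z ∈ sphere c |R|, 0 ≤ h z)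
    (havg : Real.circleAverage h c R = 0) : ∀ z ∈ sphere c |R|, h z = 0 := by
  intro z hz
  obtain ⟨η, rfl⟩ : z ∈ range (circleMap c R) := by rwa [range_circleMap]
  set F : ℝ → ℝ := fun θ ↦ h (circleMap c R (θ + η))
  have hF : Continuous F :=
    hc.comp_continuous (by fun_prop) fun θ ↦ circleMap_mem_sphere' c R (θ + η)
  have hint : ∫ θ in (0)..2 * Real.pi, F θ = 0 := by
    simpa [Real.circleAverage_eq_integral_add η, Real.pi_ne_zero] using havg
  by_contra hne
  have hsupp : (0 : ℝ) ∈ Function.support F := by simpa [F] using hne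
  have hmeet : (Function.support F ∩ Ioo 0 (2 * Real.pi)).Nonempty := by
    refine _root_.mem_closure_iff.1 ?_ _ hF.isOpen_support hsupp
    rw [closure_Ioo Real.two_pi_pos.ne]
    exact ⟨le_rfl, Real.two_pi_pos.le⟩
  have hpos : 0 < ∫ θ in (0)..2 * Real.pi, F θ := by
    rw [intervalIntegral.integral_pos_iff_support_of_nonneg_ae'
      (ae_of_all _ fun θ ↦ h0 _ (circleMap_mem_sphere' c R (θ + η))) (hF.intervalIntegrable _ _)]
    refine ⟨Real.two_pi_pos, ?_⟩
    exact ((hF.isOpen_support.inter isOpen_Ioo).measure_pos volume hmeet).trans_le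
      (measure_mono (inter_subset_inter_right _ Ioo_subset_Ioc_self))
  exact hpos.ne' hint

theorem Complex.norm_sq_eq_re_sq_of_im_eq_zero {w : ℂ} (hw : w.im = 0) :
    ‖w‖ ^ 2 = (w ^ 2).re := by
  rw [Complex.sq_norm, normSq_apply, sq, mul_re, hw]
  ring

theorem nonneg_on_sphere_of_circleAverage_norm_eq_one {f : ℂ → ℂ} {c : ℂ} {R : ℝ}
    (hf : DiffContOnCl ℂ f (ball c |R|)) (hfc : f c = 1)
    (havg : Real.circleAverage (‖f ·‖) c R = 1) : ∀ z ∈ sphere c |R|, 0 ≤ f z := by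
  have hcont : ContinuousOn f (sphere c |R|) := hf.continuousOn_ball.mono sphere_subset_closedBall
  have hre : Real.circleAverage (fun z ↦ (f z).re) c R = 1 := by
    have := reCLM.circleAverage_comp_comm hcont.circleIntegrable'
    simp_all [Function.comp_def, hf.circleAverage]
  have hzero := Real.eq_zero_on_sphere_of_circleAverage_eq_zero (h := fun z ↦ ‖f z‖ - (f z).re)
    (by fun_prop) (fun z _ ↦ sub_nonneg.2 (re_le_norm _))
    (by rw [Real.circleAverage_fun_sub hcont.norm.circleIntegrable'
      (continuous_re.comp_continuousOn hcont).circleIntegrable' (f₂ := fun z ↦ (f z).re), havg,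
      hre, sub_self])
  intro z hz
  exact Complex.re_eq_norm.1 (sub_eq_zero.1 (hzero z hz)).symm

theorem eq_one_on_sphere_of_circleAverage_norm_eq_one {f : ℂ → ℂ} {c : ℂ} {R : ℝ}
    (hf : DiffContOnCl ℂ f (ball c |R|)) (hfc : f c = 1)
    (havg : Real.circleAverage (‖f ·‖) c R = 1) : ∀ z ∈ sphere c |R|, f z = 1 := by
  have hcont : ContinuousOn f (sphere c |R|) := hf.continuousOn_ball.mono sphere_subset_closedBall
  have hnonneg := nonneg_on_sphere_of_circleAverage_norm_eq_one hf hfc havg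
  have hsq : Real.circleAverage (fun z ↦ ((f z - 1) ^ 2).re) c R = 0 := by
    have hd : DiffContOnCl ℂ (fun z ↦ (f z - 1) ^ 2) (ball c |R|) :=
      (differentiable_id.pow 2 : Differentiable ℂ fun w : ℂ ↦ w ^ 2).comp_diffContOnCl
        (hf.sub_const 1)
    have := reCLM.circleAverage_comp_comm
      (hd.continuousOn_ball.mono sphere_subset_closedBall).circleIntegrable'
    simp_all [Function.comp_def, hd.circleAverage]
  have hzero := Real.eq_zero_on_sphere_of_circleAverage_eq_zero (h := fun z ↦ ‖f z - 1‖ ^ 2)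
    (by fun_prop) (fun z _ ↦ by positivity)
    (by rw [← hsq]; exact Real.circleAverage_congr_sphere fun z hz ↦
      norm_sq_eq_re_sq_of_im_eq_zero (by simp [← (nonneg_iff.1 (hnonneg z hz)).2]))
  intro z hz
  simpa [sub_eq_zero] using hzero z hz

theorem DiffContOnCl.eq_center_of_norm_le_on_sphere {g : ℂ → ℂ} {c : ℂ} {R : ℝ}
    (hg : DiffContOnCl ℂ g (ball c R)) (hle : ∀ z ∈ sphere c R, ‖g z‖ ≤ ‖g c‖) :
    ∀ z ∈ closedBall c R, g z = g c := by
  refine Complex.eqOn_closedBall_of_isMaxOn_norm hg fun z hz ↦ ?_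
  refine Complex.norm_le_of_forall_mem_frontier_norm_le isBounded_ball hg
    (fun w hw ↦ hle w (frontier_ball_subset_sphere hw)) (subset_closure hz)

theorem stmt7 (q : ℝ) (hq : 0 < q) (g : ℂ → ℂ)
    (hgc : ContinuousOn g (Metric.closedBall 0 1))
    (hg : DifferentiableOn ℂ g (Metric.ball 0 1))
    (hg0 : g 0 = 1)
    (hnv : ∀ z ∈ Metric.closedBall (0:ℂ) 1, g z ≠ 0)
    (hmean : (∫ θ in (0:ℝ)..2 * Real.pi, ‖g (Complex.exp (θ * Complex.I))‖ ^ q) / (2 * Real.pi)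
      = 1) :
    ∀ z ∈ Metric.closedBall (0:ℂ) 1, g z = 1 := by
  obtain ⟨L, hLc, hLd, hL0, hLg⟩ := exists_log_on_closedBall zero_le_one hgc hg hnv
  set f : ℂ → ℂ := fun z ↦ exp (q * L z)
  have hf : DiffContOnCl ℂ f (ball 0 |1|) := by
    rw [abs_one]
    exact differentiable_exp.comp_diffContOnCl ((DiffContOnCl.mk_ball hLd hLc).const_smul (q : ℂ))
  have hnorm : ∀ z ∈ closedBall (0 : ℂ) 1, ‖f z‖ = ‖g z‖ ^ q := fun z hz ↦ by
    rw [← hLg z hz, norm_exp, norm_exp, ← Real.exp_mul, re_ofReal_mul, mul_comm]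
  have havg : Real.circleAverage (‖f ·‖) 0 1 = 1 := by
    rw [Real.circleAverage_congr_sphere (f₂ := (‖g ·‖ ^ q)) fun z hz ↦
      hnorm z (sphere_subset_closedBall (by simpa using hz))]
    simpa [Real.circleAverage_def, circleMap, div_eq_inv_mul] using hmean
  have hf1 := eq_one_on_sphere_of_circleAverage_norm_eq_one hf (by simp [f, hL0, hg0]) havg
  have hg1 : ∀ z ∈ sphere (0 : ℂ) 1, ‖g z‖ = 1 := fun z hz ↦ by
    have := hnorm z (sphere_subset_closedBall hz)
    rw [hf1 z (by simpa using hz), norm_one, ← Real.one_rpow q, eq_comm] at this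
    exact (Real.rpow_left_inj (norm_nonneg _) zero_le_one hq.ne').1 this
  intro z hz
  rw [← hg0]
  exact (DiffContOnCl.mk_ball hg hgc).eq_center_of_norm_le_on_sphere
    (fun w hw ↦ by rw [hg1 w hw, hg0, norm_one]) z hz
end

section
/- Let μ be a finite measure on the closed unit disk, φ : closed unit disk → closed unit disk a homeomorphism that is biholomorphic on the interiors, x₀ in the open disk with φ(x₀) = 0, and q > 0. Then λ_∞(x₀; μ, q) = λ_∞(0; φ_*μ, q), where λ_∞(z; ν, q) = inf { ∫ |Q|^q dν : Q polynomial, Q(z) = 1 } and φ_*μ is the pushforward measure. (Here one uses that any continuous function on the closed disk holomorphic inside can be uniformly approximated by polynomials.) -/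
/-!
For a polynomial `P` with `P 0 = 1`, the function `P ∘ φ` is continuous on the closed disk,
holomorphic inside, equal to `1` at `x₀`, and `∫ |P ∘ φ|^q dμ = ∫ |P|^q d(φ_* μ)`. Such a function
is a uniform limit of polynomials on the closed disk (dilate it to a function holomorphic on a larger
disk and truncate its Taylor series), and adding a small constant renormalizes the approximants at
`x₀`; dominated convergence then gives `λ_∞(x₀; μ, q) ≤ λ_∞(0; φ_* μ, q)`. The inverse map `ψ`
gives the reverse inequality, because `ψ_* φ_* μ = μ`.
-/

open MeasureTheory Set Polynomial Filter Topology Metric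

/-- The paper's `λ_∞(z₀; ν, q)`. -/
noncomputable def christoffelFunction (ν : Measure ℂ) (q : ℝ) (z₀ : ℂ) : ℝ :=
  sInf {x | ∃ Q : ℂ[X], Q.eval z₀ = 1 ∧ x = ∫ z, ‖Q.eval z‖ ^ q ∂ν}

theorem ContinuousOn.aemeasurable_of_ae_mem {α β : Type*} [TopologicalSpace α]
    [MeasurableSpace α] [OpensMeasurableSpace α] [TopologicalSpace β] [MeasurableSpace β]
    [BorelSpace β] {f : α → β} {s : Set α} {μ : Measure α} (hf : ContinuousOn f s)
    (hs : MeasurableSet s) (hμ : ∀ᵐ x ∂μ, x ∈ s) : AEMeasurable f μ := by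
  simpa [Measure.restrict_eq_self_of_ae_mem hμ] using hf.aemeasurable (μ := μ) hs

theorem FormalMultilinearSeries.partialSum_eq_eval {𝕜 : Type*} [NontriviallyNormedField 𝕜]
    (p : FormalMultilinearSeries 𝕜 𝕜 𝕜) (n : ℕ) (z : 𝕜) :
    p.partialSum n z = (∑ k ∈ Finset.range n, C (p.coeff k) * X ^ k).eval z := by
  simp only [partialSum, apply_eq_pow_smul_coeff, smul_eq_mul, eval_finsetSum, eval_mul, eval_C,
    eval_pow, eval_X, mul_comm]

theorem exists_polynomial_dist_lt_of_differentiableOn_closedBall {f : ℂ → ℂ} {r R : ℝ}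
    (hf : DifferentiableOn ℂ f (closedBall 0 R)) (hr : 0 ≤ r) (hrR : r < R) {ε : ℝ}
    (hε : 0 < ε) : ∃ P : ℂ[X], ∀ z ∈ closedBall (0 : ℂ) r, dist (f z) (P.eval z) < ε := by
  lift R to NNReal using hr.trans hrR.le
  lift r to NNReal using hr
  obtain ⟨r', hr', hr'R⟩ := exists_between (NNReal.coe_lt_coe.1 hrR)
  have hps := hf.hasFPowerSeriesOnBall (pos_of_gt hr'R)
  obtain ⟨n, hn⟩ := (Metric.tendstoUniformlyOn_iff.1
    (hps.tendstoUniformlyOn (ENNReal.coe_lt_coe.2 hr'R)) ε hε).exists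
  refine ⟨∑ k ∈ Finset.range n, C ((cauchyPowerSeries f 0 R).coeff k) * X ^ k, fun z hz => ?_⟩
  rw [← FormalMultilinearSeries.partialSum_eq_eval]
  simpa using hn z (closedBall_subset_ball (NNReal.coe_lt_coe.2 hr') hz)

theorem tendstoUniformlyOn_comp_ofReal_mul {E : Type*} [UniformSpace E] {f : ℂ → E} {R : ℝ}
    (hf : ContinuousOn f (closedBall 0 R)) :
    TendstoUniformlyOn (fun (r : ℝ) z => f (r * z)) f (𝓝[<] 1) (closedBall 0 R) := by
  intro u hu
  have hcont : ContinuousOn (Function.uncurry fun (r : ℝ) z => f (r * z))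
      (Icc 0 1 ×ˢ closedBall 0 R) := by
    refine hf.comp (by fun_prop) fun p ⟨⟨hp0, hp1⟩, hp⟩ => ?_
    rw [mem_closedBall_zero_iff] at hp ⊢
    rw [norm_mul, Complex.norm_real, Real.norm_of_nonneg hp0]
    exact (mul_le_of_le_one_left (norm_nonneg _) hp1).trans hp
  obtain ⟨v, hv, hvu⟩ := (isCompact_closedBall (0 : ℂ) R).mem_uniformity_of_prod hcont
    (right_mem_Icc.2 zero_le_one) (symm_le_uniformity hu)
  filter_upwards [nhdsWithin_le_of_mem (mem_of_superset (Ioo_mem_nhdsLT one_pos)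
    Ioo_subset_Icc_self) hv] with r hr z hz
  simpa using hvu r hr z hz

theorem exists_polynomial_dist_lt_of_continuousOn_closedBall {f : ℂ → ℂ} {R : ℝ} (hR : 0 < R)
    (hc : ContinuousOn f (closedBall 0 R)) (hd : DifferentiableOn ℂ f (ball 0 R)) {ε : ℝ}
    (hε : 0 < ε) : ∃ P : ℂ[X], ∀ z ∈ closedBall (0 : ℂ) R, dist (f z) (P.eval z) < ε := by
  obtain ⟨r, hdil, hr0, hr1⟩ := ((Metric.tendstoUniformlyOn_iff.1
    (tendstoUniformlyOn_comp_ofReal_mul hc) _ (half_pos hε)).and (Ioo_mem_nhdsLT one_pos)).exists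
  obtain ⟨R', hRR', hR'⟩ := exists_between (lt_div_iff₀ hr0 |>.2 (mul_lt_of_lt_one_right hR hr1))
  have hdiff : DifferentiableOn ℂ (fun z => f (r * z)) (closedBall 0 R') := by
    refine hd.comp (by fun_prop) fun z hz => ?_
    rw [mem_closedBall_zero_iff] at hz
    rw [mem_ball_zero_iff, norm_mul, Complex.norm_real, Real.norm_of_nonneg hr0.le]
    calc r * ‖z‖ ≤ r * R' := by gcongr
      _ < R := (lt_div_iff₀' hr0).1 hR'
  obtain ⟨P, hP⟩ := exists_polynomial_dist_lt_of_differentiableOn_closedBall hdiff hR.le hRR'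
    (half_pos hε)
  exact ⟨P, fun z hz => (dist_triangle _ _ _).trans_lt
    (by linarith [hdil z hz, hP z hz])⟩

theorem exists_polynomial_eval_eq_dist_lt {𝕜 : Type*} [NormedField 𝕜] {f : 𝕜 → 𝕜} {s : Set 𝕜}
    (happrox : ∀ ε > 0, ∃ P : 𝕜[X], ∀ z ∈ s, dist (f z) (P.eval z) < ε) {z₀ : 𝕜}
    (hz₀ : z₀ ∈ s) {ε : ℝ} (hε : 0 < ε) :
    ∃ P : 𝕜[X], P.eval z₀ = f z₀ ∧ ∀ z ∈ s, dist (f z) (P.eval z) < ε := by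
  obtain ⟨P, hP⟩ := happrox (ε / 2) (half_pos hε)
  refine ⟨P + C (f z₀ - P.eval z₀), by simp, fun z hz => ?_⟩
  calc dist (f z) ((P + C (f z₀ - P.eval z₀)).eval z)
      ≤ dist (f z) (P.eval z) + dist (f z₀) (P.eval z₀) := by
        rw [eval_add, eval_C, dist_eq_norm, dist_eq_norm, dist_eq_norm, sub_add_eq_sub_sub]
        exact norm_sub_le _ _
    _ < ε := by linarith [hP z hz, hP z₀ hz₀]

theorem christoffelFunction_le_integral {ν : Measure ℂ} [IsFiniteMeasure ν] {s : Set ℂ}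
    (hν : ∀ᵐ z ∂ν, z ∈ s) {q : ℝ} (hq : 0 ≤ q) {g : ℂ → ℂ} {M : ℝ} (hgM : ∀ z ∈ s, ‖g z‖ ≤ M)
    {z₀ : ℂ} (happrox : ∀ ε > 0, ∃ P : ℂ[X], P.eval z₀ = 1 ∧ ∀ z ∈ s, dist (g z) (P.eval z) < ε) :
    christoffelFunction ν q z₀ ≤ ∫ z, ‖g z‖ ^ q ∂ν := by
  choose P hP1 hP using fun n : ℕ => happrox (1 / (n + 1)) Nat.one_div_pos_of_nat
  have hlim : ∀ z ∈ s, Tendsto (fun n => (P n).eval z) atTop (𝓝 (g z)) := fun z hz =>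
    tendsto_iff_dist_tendsto_zero.2 <| squeeze_zero (fun _ => dist_nonneg)
      (fun n => by rw [dist_comm]; exact (hP n z hz).le) tendsto_one_div_add_atTop_nhds_zero_nat
  have hbound : ∀ n, ∀ z ∈ s, ‖(P n).eval z‖ ^ q ≤ (M + 1) ^ q := fun n z hz => by
    have hclose : ‖(P n).eval z - g z‖ ≤ 1 := by
      rw [← dist_eq_norm, dist_comm]
      exact (hP n z hz).le.trans (div_le_one_of_le₀ (by simp) (by positivity))
    gcongr
    linarith [norm_le_norm_add_norm_sub' ((P n).eval z) (g z), hgM z hz]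
  have hint : Tendsto (fun n => ∫ z, ‖(P n).eval z‖ ^ q ∂ν) atTop (𝓝 (∫ z, ‖g z‖ ^ q ∂ν)) :=
    tendsto_integral_of_dominated_convergence (fun _ => (M + 1) ^ q)
      (fun n => (by fun_prop : Continuous fun z => ‖(P n).eval z‖ ^ q).aestronglyMeasurable)
      (integrable_const _)
      (fun n => hν.mono fun z hz => (Real.norm_of_nonneg (by positivity)).trans_le
        (hbound n z hz))
      (hν.mono fun z hz => (hlim z hz).norm.rpow_const (Or.inr hq))
  refine ge_of_tendsto' hint fun n => csInf_le ⟨0, ?_⟩ ⟨P n, hP1 n, rfl⟩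
  rintro _ ⟨Q, -, rfl⟩
  exact integral_nonneg fun z => by positivity

theorem christoffelFunction_le_integral_of_differentiableOn {ν : Measure ℂ} [IsFiniteMeasure ν]
    {R : ℝ} (hR : 0 < R) (hν : ∀ᵐ z ∂ν, z ∈ closedBall 0 R) {q : ℝ} (hq : 0 ≤ q) {g : ℂ → ℂ}
    (hgc : ContinuousOn g (closedBall 0 R)) (hgd : DifferentiableOn ℂ g (ball 0 R)) {z₀ : ℂ}
    (hz₀ : z₀ ∈ closedBall 0 R) (hgz₀ : g z₀ = 1) :
    christoffelFunction ν q z₀ ≤ ∫ z, ‖g z‖ ^ q ∂ν := by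
  obtain ⟨M, hM⟩ := (isCompact_closedBall (0 : ℂ) R).exists_bound_of_continuousOn hgc
  refine christoffelFunction_le_integral hν hq hM fun ε hε => ?_
  rw [← hgz₀]
  exact exists_polynomial_eval_eq_dist_lt
    (fun ε hε => exists_polynomial_dist_lt_of_continuousOn_closedBall hR hgc hgd hε) hz₀ hε

theorem christoffelFunction_le_map {μ : Measure ℂ} [IsFiniteMeasure μ] {R : ℝ} (hR : 0 < R)
    (hμ : ∀ᵐ z ∂μ, z ∈ closedBall 0 R) {q : ℝ} (hq : 0 ≤ q) {φ : ℂ → ℂ}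
    (hφc : ContinuousOn φ (closedBall 0 R)) (hφd : DifferentiableOn ℂ φ (ball 0 R)) {x₀ : ℂ}
    (hx₀ : x₀ ∈ closedBall 0 R) :
    christoffelFunction μ q x₀ ≤ christoffelFunction (μ.map φ) q (φ x₀) := by
  refine le_csInf ⟨_, 1, eval_one, rfl⟩ ?_
  rintro _ ⟨P, hP, rfl⟩
  rw [integral_map (hφc.aemeasurable_of_ae_mem measurableSet_closedBall hμ)
    (by fun_prop : Continuous fun w => ‖P.eval w‖ ^ q).aestronglyMeasurable]
  exact christoffelFunction_le_integral_of_differentiableOn hR hμ hq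
    (P.continuous.comp_continuousOn hφc) (P.differentiable.comp_differentiableOn hφd) hx₀ hP

theorem stmt16_general (μ : Measure ℂ) [IsFiniteMeasure μ]
    (hμc : μ (Metric.closedBall (0:ℂ) 1)ᶜ = 0)
    (φ ψ : ℂ → ℂ)
    (hφc : ContinuousOn φ (Metric.closedBall 0 1))
    (hφd : DifferentiableOn ℂ φ (Metric.ball 0 1))
    (hφmaps : Set.MapsTo φ (Metric.closedBall 0 1) (Metric.closedBall 0 1))
    (hψc : ContinuousOn ψ (Metric.closedBall 0 1))
    (hψd : DifferentiableOn ℂ ψ (Metric.ball 0 1))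
    (hinv₁ : ∀ z ∈ Metric.closedBall (0:ℂ) 1, ψ (φ z) = z)
    (x₀ : ℂ) (hx₀ : x₀ ∈ Metric.ball (0:ℂ) 1) (hφx₀ : φ x₀ = 0)
    (q : ℝ) (hq : 0 < q) :
    sInf {x | ∃ Q : Polynomial ℂ, Q.eval x₀ = 1 ∧ x = ∫ z, ‖Q.eval z‖ ^ q ∂μ} =
      sInf {x | ∃ Q : Polynomial ℂ, Q.eval 0 = 1 ∧ x = ∫ z, ‖Q.eval z‖ ^ q ∂(μ.map φ)} := by
  have hx₀c : x₀ ∈ closedBall (0 : ℂ) 1 := ball_subset_closedBall hx₀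
  have hμ : ∀ᵐ z ∂μ, z ∈ closedBall (0 : ℂ) 1 := ae_iff.2 hμc
  have hφ : AEMeasurable φ μ := hφc.aemeasurable_of_ae_mem measurableSet_closedBall hμ
  have hφμ : ∀ᵐ w ∂μ.map φ, w ∈ closedBall (0 : ℂ) 1 :=
    (ae_map_iff hφ measurableSet_closedBall).2 (hμ.mono hφmaps)
  have hψφμ : (μ.map φ).map ψ = μ := by
    rw [AEMeasurable.map_map_of_aemeasurable
      (hψc.aemeasurable_of_ae_mem measurableSet_closedBall hφμ) hφ]
    exact (Measure.map_congr (hμ.mono hinv₁)).trans Measure.map_id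
  have hψ0 : ψ 0 = x₀ := by rw [← hφx₀, hinv₁ x₀ hx₀c]
  change christoffelFunction μ q x₀ = christoffelFunction (μ.map φ) q 0
  refine le_antisymm (hφx₀ ▸ christoffelFunction_le_map one_pos hμ hq.le hφc hφd hx₀c) ?_
  simpa only [hψφμ, hψ0] using christoffelFunction_le_map one_pos hφμ hq.le hψc hψd
    (mem_closedBall_self zero_le_one)

theorem stmt16 (μ : Measure ℂ) [IsFiniteMeasure μ]
    (hμc : μ (Metric.closedBall (0:ℂ) 1)ᶜ = 0)
    (φ ψ : ℂ → ℂ)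
    (hφc : ContinuousOn φ (Metric.closedBall 0 1))
    (hφd : DifferentiableOn ℂ φ (Metric.ball 0 1))
    (hφmaps : Set.MapsTo φ (Metric.closedBall 0 1) (Metric.closedBall 0 1))
    (hφball : Set.MapsTo φ (Metric.ball 0 1) (Metric.ball 0 1))
    (hψc : ContinuousOn ψ (Metric.closedBall 0 1))
    (hψd : DifferentiableOn ℂ ψ (Metric.ball 0 1))
    (hψmaps : Set.MapsTo ψ (Metric.closedBall 0 1) (Metric.closedBall 0 1))
    (hinv₁ : ∀ z ∈ Metric.closedBall (0:ℂ) 1, ψ (φ z) = z)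
    (hinv₂ : ∀ z ∈ Metric.closedBall (0:ℂ) 1, φ (ψ z) = z)
    (x₀ : ℂ) (hx₀ : x₀ ∈ Metric.ball (0:ℂ) 1) (hφx₀ : φ x₀ = 0)
    (q : ℝ) (hq : 0 < q) :
    sInf {x | ∃ Q : Polynomial ℂ, Q.eval x₀ = 1 ∧ x = ∫ z, ‖Q.eval z‖ ^ q ∂μ} =
      sInf {x | ∃ Q : Polynomial ℂ, Q.eval 0 = 1 ∧ x = ∫ z, ‖Q.eval z‖ ^ q ∂(μ.map φ)} :=
  stmt16_general μ hμc φ ψ hφc hφd hφmaps hψc hψd hinv₁ x₀ hx₀ hφx₀ q hq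
end
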